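/- arXiv:1102.3294 — 2 statements merged into one kernel-verified Lean document; each statement's English description precedes it below -/
import Mathlib

section
/- If for each i = 0,...,n-1 the random variables Y_i and (X_{i+1},...,X_n) are conditionally independent given (X^i, Y^{i-1}), then for each i = 0,...,n-1, Y^i ↔ X^i ↔ X_{i+1} forms a Markov chain. -/
open Finset
open scoped Classical

/-- Probability of an event under a pmf `p` on a finite sample space. -/
noncomputable def pr {Ω : Type} [Fintype Ω] (p : Ω → ℝ) (E : Ω → Prop) : ℝ :=
  ∑ ω, if E ω then p ω else 0

/-- Conditional mutual information `I(f; g | h)` of random variables on a finite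
sample space, via `I(A;B|C) = E[log (p(a,b,c) p(c) / (p(a,c) p(b,c)))]`. -/
noncomputable def condMI {Ω A B C : Type} [Fintype Ω] (p : Ω → ℝ)
    (f : Ω → A) (g : Ω → B) (h : Ω → C) : ℝ :=
  ∑ ω, p ω * Real.log
    ((pr p (fun ω' => f ω' = f ω ∧ g ω' = g ω ∧ h ω' = h ω) *
      pr p (fun ω' => h ω' = h ω)) /
     (pr p (fun ω' => f ω' = f ω ∧ h ω' = h ω) *
      pr p (fun ω' => g ω' = g ω ∧ h ω' = h ω)))

/-- Mutual information `I(f; g)`. -/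
noncomputable def mutInfoRV {Ω A B : Type} [Fintype Ω] (p : Ω → ℝ)
    (f : Ω → A) (g : Ω → B) : ℝ :=
  condMI p f g (fun _ => ())

/-- The prefix `Z^i = (Z_0, …, Z_i)` of a sequence-valued random variable. -/
def pref {Ω α : Type} {n : ℕ} (Z : Ω → Fin (n + 1) → α) (i : Fin (n + 1)) :
    Ω → Fin (i.1 + 1) → α :=
  fun ω j => Z ω (Fin.castLE i.isLt j)

/-- The strict prefix `Z^{i-1} = (Z_0, …, Z_{i-1})`. -/
def spref {Ω α : Type} {n : ℕ} (Z : Ω → Fin (n + 1) → α) (i : Fin (n + 1)) :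
    Ω → Fin i.1 → α :=
  fun ω j => Z ω (Fin.castLE i.isLt.le j)

/-- Directed information `I(X^n → Y^n) = ∑_{i=0}^n I(X^i; Y_i | Y^{i-1})`. -/
noncomputable def dirInfo {Ω 𝒳 𝒴 : Type} [Fintype Ω] {n : ℕ} (p : Ω → ℝ)
    (X : Ω → Fin (n + 1) → 𝒳) (Y : Ω → Fin (n + 1) → 𝒴) : ℝ :=
  ∑ i : Fin (n + 1), condMI p (pref X i) (fun ω => Y ω i) (spref Y i)

/-- Reverse directed information `I(X^n ← Y^n) = ∑_{i=0}^n I(Y^{i-1}; X_i | X^{i-1})`. -/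
noncomputable def revDirInfo {Ω 𝒳 𝒴 : Type} [Fintype Ω] {n : ℕ} (p : Ω → ℝ)
    (X : Ω → Fin (n + 1) → 𝒳) (Y : Ω → Fin (n + 1) → 𝒴) : ℝ :=
  ∑ i : Fin (n + 1), condMI p (spref Y i) (fun ω => X ω i) (spref X i)

/-- Conditional independence of `f` and `g` given `h` (a Markov chain `f ↔ h ↔ g`),
stated via factorization of joint probability mass functions. -/
def CondIndep {Ω A B C : Type} [Fintype Ω] (p : Ω → ℝ)
    (f : Ω → A) (g : Ω → B) (h : Ω → C) : Prop :=
  ∀ (a : A) (b : B) (c : C),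
    pr p (fun ω => f ω = a ∧ g ω = b ∧ h ω = c) * pr p (fun ω => h ω = c) =
    pr p (fun ω => f ω = a ∧ h ω = c) * pr p (fun ω => g ω = b ∧ h ω = c)

lemma pr_congr {Ω : Type} [Fintype Ω] (p : Ω → ℝ) {E F : Ω → Prop}
    (h : ∀ ω, E ω ↔ F ω) : pr p E = pr p F :=
  Finset.sum_congr rfl fun ω _ => if_congr (h ω) rfl rfl

lemma pr_eq_zero_iff {Ω : Type} [Fintype Ω] {p : Ω → ℝ} (hpos : ∀ ω, 0 < p ω)
    (E : Ω → Prop) : pr p E = 0 ↔ ∀ ω, ¬ E ω := by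
  unfold pr
  rw [Finset.sum_eq_zero_iff_of_nonneg (fun ω _ => by split <;> [exact (hpos ω).le; rfl])]
  constructor
  · intro h ω hE
    have := h ω (Finset.mem_univ ω)
    rw [if_pos hE] at this
    exact (hpos ω).ne' this
  · intro h ω _
    rw [if_neg (h ω)]

lemma pr_zero_mono {Ω : Type} [Fintype Ω] {p : Ω → ℝ} (hpos : ∀ ω, 0 < p ω)
    {E F : Ω → Prop} (hEF : ∀ ω, E ω → F ω) (hF : pr p F = 0) : pr p E = 0 := by
  rw [pr_eq_zero_iff hpos] at *
  exact fun ω hE => hF ω (hEF ω hE)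

lemma pr_marg {Ω B : Type} [Fintype Ω] [Fintype B] (p : Ω → ℝ)
    (E : Ω → Prop) (g : Ω → B) (Q : B → Prop) :
    pr p (fun ω => E ω ∧ Q (g ω)) =
      ∑ b ∈ Finset.univ.filter Q, pr p (fun ω => E ω ∧ g ω = b) := by
  unfold pr
  rw [Finset.sum_comm]
  refine Finset.sum_congr rfl fun ω _ => ?_
  by_cases hE : E ω
  · by_cases hQ : Q (g ω)
    · rw [if_pos ⟨hE, hQ⟩,
        Finset.sum_eq_single_of_mem (g ω) (by simp [hQ])
          (fun b _ hb => by rw [if_neg]; rintro ⟨-, h⟩; exact hb h.symm)]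
      rw [if_pos ⟨hE, rfl⟩]
    · rw [if_neg (by tauto)]
      refine (Finset.sum_eq_zero fun b hb => ?_).symm
      rw [if_neg]
      rintro ⟨-, h⟩
      exact hQ (h ▸ (Finset.mem_filter.mp hb).2)
  · rw [if_neg (by tauto)]
    refine (Finset.sum_eq_zero fun b hb => ?_).symm
    rw [if_neg (by tauto)]

lemma pr_marg' {Ω B : Type} [Fintype Ω] [Fintype B] (p : Ω → ℝ)
    (g : Ω → B) (Q : B → Prop) :
    pr p (fun ω => Q (g ω)) =
      ∑ b ∈ Finset.univ.filter Q, pr p (fun ω => g ω = b) := by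
  have := pr_marg p (fun _ => True) g Q
  rw [pr_congr p (F := fun ω => Q (g ω)) (fun ω => by tauto)] at this
  rw [this]
  exact Finset.sum_congr rfl fun b _ => pr_congr p fun ω => by tauto

/-- the event that `Z` agrees with `z` on all coordinates `< m`. -/
def Ev {Ω α : Type} {n : ℕ} (Z : Ω → Fin (n + 1) → α) (z : Fin (n + 1) → α)
    (m : ℕ) : Ω → Prop :=
  fun ω => ∀ k : Fin (n + 1), (k : ℕ) < m → Z ω k = z k

lemma key {Ω 𝒳 𝒴 : Type} [Fintype Ω] [Fintype 𝒳] [Fintype 𝒴] {n : ℕ}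
    (p : Ω → ℝ) (hpos : ∀ ω, 0 < p ω)
    (X : Ω → Fin (n + 1) → 𝒳) (Y : Ω → Fin (n + 1) → 𝒴)
    (hmc : ∀ i : Fin n,
      CondIndep p (fun ω => Y ω i.castSucc)
        (fun ω => fun j : {k : Fin (n + 1) // i.castSucc < k} => X ω j.1)
        (fun ω => (pref X i.castSucc ω, spref Y i.castSucc ω))) :
    ∀ m : ℕ, m ≤ n → ∀ (x : Fin (n + 1) → 𝒳) (y : Fin (n + 1) → 𝒴),
      pr p (fun ω => Ev Y y m ω ∧ X ω = x) * pr p (Ev X x m) =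
      pr p (fun ω => X ω = x) * pr p (fun ω => Ev Y y m ω ∧ Ev X x m ω) := by
  intro m
  induction m with
  | zero =>
    intro _ x y
    have e1 : pr p (fun ω => Ev Y y 0 ω ∧ X ω = x) = pr p (fun ω => X ω = x) :=
      pr_congr p fun ω => by simp [Ev]
    have e2 : pr p (Ev X x 0) = pr p (fun ω => Ev Y y 0 ω ∧ Ev X x 0 ω) :=
      pr_congr p fun ω => by simp [Ev]
    rw [e1, e2]
  | succ m ih =>
    intro hm1 x y
    have hmn : m ≤ n := le_of_lt hm1
    set ic : Fin (n + 1) := Fin.castSucc ⟨m, hm1⟩ with hic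
    have hic1 : (ic : Fin (n + 1)).1 = m := rfl
    -- basic iffs
    have hpref : ∀ {α : Type} (Z : Ω → Fin (n + 1) → α) (z : Fin (n + 1) → α) (ω : Ω),
        (pref Z ic ω = fun j => z (Fin.castLE ic.isLt j)) ↔ Ev Z z (m + 1) ω := by
      intro α Z z ω
      rw [funext_iff]
      constructor
      · intro h k hk
        have hk' : (k : ℕ) < ic.1 + 1 := by omega
        have := h ⟨k.1, hk'⟩
        rwa [show Fin.castLE ic.isLt ⟨k.1, hk'⟩ = k from Fin.ext rfl] at this
      · intro h j
        exact h _ (by have h1 : (Fin.castLE ic.isLt j : Fin (n+1)).1 = (j : ℕ) := rfl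
                      have h2 := j.isLt; omega)
    have hspref : ∀ {α : Type} (Z : Ω → Fin (n + 1) → α) (z : Fin (n + 1) → α) (ω : Ω),
        (spref Z ic ω = fun j => z (Fin.castLE ic.isLt.le j)) ↔ Ev Z z m ω := by
      intro α Z z ω
      rw [funext_iff]
      constructor
      · intro h k hk
        have hk' : (k : ℕ) < ic.1 := by omega
        have := h ⟨k.1, hk'⟩
        rwa [show Fin.castLE ic.isLt.le ⟨k.1, hk'⟩ = k from Fin.ext rfl] at this
      · intro h j
        exact h _ (by have h1 : (Fin.castLE ic.isLt.le j : Fin (n+1)).1 = (j : ℕ) := rfl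
                      have h2 := j.isLt; omega)
    have hsub : ∀ ω, ((fun j : {k : Fin (n + 1) // ic < k} => X ω j.1) =
        (fun j => x j.1)) ↔ ∀ k : Fin (n + 1), m < (k : ℕ) → X ω k = x k := by
      intro ω
      rw [funext_iff]
      constructor
      · intro h k hk
        exact h ⟨k, by simpa [Fin.lt_def, hic1] using hk⟩
      · intro h j
        exact h j.1 (by simpa [Fin.lt_def, hic1] using j.2)
    have hsplit : ∀ ω, X ω = x ↔
        (Ev X x (m + 1) ω ∧ ∀ k : Fin (n + 1), m < (k : ℕ) → X ω k = x k) := by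
      intro ω
      rw [funext_iff]
      constructor
      · intro h
        exact ⟨fun k _ => h k, fun k _ => h k⟩
      · rintro ⟨h1, h2⟩ k
        rcases lt_or_ge (k : ℕ) (m + 1) with hk | hk
        · exact h1 k hk
        · exact h2 k (by omega)
    have hYsplit : ∀ ω, (Y ω ic = y ic ∧ Ev Y y m ω) ↔ Ev Y y (m + 1) ω := by
      intro ω
      constructor
      · rintro ⟨h1, h2⟩ k hk
        by_cases hk' : (k : ℕ) < m
        · exact h2 k hk'
        · have : k = ic := Fin.ext (by omega)
          rw [this]; exact h1
      · intro h
        exact ⟨h ic (by omega), fun k hk => h k (by omega)⟩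
    -- instantiate the Markov hypothesis
    have H0 := hmc ⟨m, hm1⟩ (y ic) (fun j => x j.1)
      (fun j => x (Fin.castLE ic.isLt j), fun j => y (Fin.castLE ic.isLt.le j))
    have hpair : ∀ ω, ((pref X ic ω, spref Y ic ω) =
        (fun j => x (Fin.castLE ic.isLt j), fun j => y (Fin.castLE ic.isLt.le j))) ↔
        (Ev X x (m + 1) ω ∧ Ev Y y m ω) := by
      intro ω
      rw [Prod.mk.injEq]
      exact and_congr (hpref X x ω) (hspref Y y ω)
    have H : pr p (fun ω => Ev Y y (m + 1) ω ∧ X ω = x) *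
        pr p (fun ω => Ev Y y m ω ∧ Ev X x (m + 1) ω) =
        pr p (fun ω => Ev Y y (m + 1) ω ∧ Ev X x (m + 1) ω) *
        pr p (fun ω => Ev Y y m ω ∧ X ω = x) := by
      have e1 : pr p (fun ω => Y ω ic = y ic ∧
          ((fun j : {k : Fin (n + 1) // ic < k} => X ω j.1) = fun j => x j.1) ∧
          (pref X ic ω, spref Y ic ω) =
            (fun j => x (Fin.castLE ic.isLt j), fun j => y (Fin.castLE ic.isLt.le j))) =
          pr p (fun ω => Ev Y y (m + 1) ω ∧ X ω = x) :=
        pr_congr p fun ω => by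
          rw [hpair ω, hsub ω, hsplit ω]
          have := hYsplit ω
          tauto
      have e2 : pr p (fun ω => (pref X ic ω, spref Y ic ω) =
            (fun j => x (Fin.castLE ic.isLt j), fun j => y (Fin.castLE ic.isLt.le j))) =
          pr p (fun ω => Ev Y y m ω ∧ Ev X x (m + 1) ω) :=
        pr_congr p fun ω => by rw [hpair ω]; tauto
      have e3 : pr p (fun ω => Y ω ic = y ic ∧
          (pref X ic ω, spref Y ic ω) =
            (fun j => x (Fin.castLE ic.isLt j), fun j => y (Fin.castLE ic.isLt.le j))) =
          pr p (fun ω => Ev Y y (m + 1) ω ∧ Ev X x (m + 1) ω) :=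
        pr_congr p fun ω => by
          rw [hpair ω]
          have := hYsplit ω
          tauto
      have e4 : pr p (fun ω =>
          ((fun j : {k : Fin (n + 1) // ic < k} => X ω j.1) = fun j => x j.1) ∧
          (pref X ic ω, spref Y ic ω) =
            (fun j => x (Fin.castLE ic.isLt j), fun j => y (Fin.castLE ic.isLt.le j))) =
          pr p (fun ω => Ev Y y m ω ∧ X ω = x) :=
        pr_congr p fun ω => by
          rw [hpair ω, hsub ω, hsplit ω]
          tauto
      rw [← e1, ← e2, ← e3, ← e4]
      exact H0
    -- marginalised induction hypothesis
    have hP : pr p (fun ω => Ev Y y m ω ∧ Ev X x (m + 1) ω) =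
        ∑ x' ∈ Finset.univ.filter
          (fun x' : Fin (n + 1) → 𝒳 => ∀ k : Fin (n + 1), (k : ℕ) < m + 1 → x' k = x k),
          pr p (fun ω => Ev Y y m ω ∧ X ω = x') := by
      refine Eq.trans (Eq.trans ?_ (pr_marg p (Ev Y y m) (fun ω => X ω)
        (fun x' => ∀ k : Fin (n + 1), (k : ℕ) < m + 1 → x' k = x k))) ?_
      · exact pr_congr p fun ω => Iff.rfl
      · exact Finset.sum_congr (Finset.filter_congr_decidable _ _ _) fun _ _ => rfl
    have hB : pr p (Ev X x (m + 1)) =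
        ∑ x' ∈ Finset.univ.filter
          (fun x' : Fin (n + 1) → 𝒳 => ∀ k : Fin (n + 1), (k : ℕ) < m + 1 → x' k = x k),
          pr p (fun ω => X ω = x') := by
      refine Eq.trans (Eq.trans ?_ (pr_marg' p (fun ω => X ω)
        (fun x' => ∀ k : Fin (n + 1), (k : ℕ) < m + 1 → x' k = x k))) ?_
      · exact pr_congr p fun ω => Iff.rfl
      · exact Finset.sum_congr (Finset.filter_congr_decidable _ _ _) fun _ _ => rfl
    have hM : pr p (fun ω => Ev Y y m ω ∧ Ev X x (m + 1) ω) * pr p (Ev X x m) =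
        pr p (Ev X x (m + 1)) * pr p (fun ω => Ev Y y m ω ∧ Ev X x m ω) := by
      rw [hP, hB, Finset.sum_mul, Finset.sum_mul]
      refine Finset.sum_congr rfl fun x' hx' => ?_
      have hx'' := (Finset.mem_filter.mp hx').2
      have eG : pr p (Ev X x m) = pr p (Ev X x' m) :=
        pr_congr p fun ω => forall_congr' fun k => imp_congr_right fun hk => by
          rw [hx'' k (by omega)]
      have eR : pr p (fun ω => Ev Y y m ω ∧ Ev X x' m ω) =
          pr p (fun ω => Ev Y y m ω ∧ Ev X x m ω) :=
        pr_congr p fun ω => and_congr_right fun _ =>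
          forall_congr' fun k => imp_congr_right fun hk => by rw [hx'' k (by omega)]
      rw [eG, ih hmn x' y, eR]
    -- algebra
    by_cases hP0 : pr p (fun ω => Ev Y y m ω ∧ Ev X x (m + 1) ω) = 0
    · have hA : pr p (fun ω => Ev Y y (m + 1) ω ∧ X ω = x) = 0 :=
        pr_zero_mono hpos (fun ω h =>
          ⟨fun k hk => h.1 k (by omega), fun k hk => by rw [h.2]⟩) hP0
      have hD : pr p (fun ω => Ev Y y (m + 1) ω ∧ Ev X x (m + 1) ω) = 0 :=
        pr_zero_mono hpos (fun ω h => ⟨fun k hk => h.1 k (by omega), h.2⟩) hP0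
      rw [hA, hD]
      ring
    · have hG0 : pr p (Ev X x m) ≠ 0 := by
        intro h
        exact hP0 (pr_zero_mono hpos
          (fun ω h' k hk => h'.2 k (by omega)) h)
      have hPG : pr p (fun ω => Ev Y y m ω ∧ Ev X x (m + 1) ω) * pr p (Ev X x m) ≠ 0 :=
        mul_ne_zero hP0 hG0
      apply mul_right_cancel₀ hPG
      have hS := ih hmn x y
      calc pr p (fun ω => Ev Y y (m + 1) ω ∧ X ω = x) * pr p (Ev X x (m + 1)) *
            (pr p (fun ω => Ev Y y m ω ∧ Ev X x (m + 1) ω) * pr p (Ev X x m))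
          = (pr p (fun ω => Ev Y y (m + 1) ω ∧ X ω = x) *
              pr p (fun ω => Ev Y y m ω ∧ Ev X x (m + 1) ω)) *
            (pr p (Ev X x (m + 1)) * pr p (Ev X x m)) := by ring
        _ = (pr p (fun ω => Ev Y y (m + 1) ω ∧ Ev X x (m + 1) ω) *
              pr p (fun ω => Ev Y y m ω ∧ X ω = x)) *
            (pr p (Ev X x (m + 1)) * pr p (Ev X x m)) := by rw [H]
        _ = pr p (fun ω => Ev Y y (m + 1) ω ∧ Ev X x (m + 1) ω) *
            (pr p (fun ω => Ev Y y m ω ∧ X ω = x) * pr p (Ev X x m)) *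
            pr p (Ev X x (m + 1)) := by ring
        _ = pr p (fun ω => Ev Y y (m + 1) ω ∧ Ev X x (m + 1) ω) *
            (pr p (fun ω => X ω = x) * pr p (fun ω => Ev Y y m ω ∧ Ev X x m ω)) *
            pr p (Ev X x (m + 1)) := by rw [hS]
        _ = pr p (fun ω => X ω = x) *
            pr p (fun ω => Ev Y y (m + 1) ω ∧ Ev X x (m + 1) ω) *
            (pr p (Ev X x (m + 1)) * pr p (fun ω => Ev Y y m ω ∧ Ev X x m ω)) := by ring
        _ = pr p (fun ω => X ω = x) *
            pr p (fun ω => Ev Y y (m + 1) ω ∧ Ev X x (m + 1) ω) *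
            (pr p (fun ω => Ev Y y m ω ∧ Ev X x (m + 1) ω) * pr p (Ev X x m)) := by
              rw [hM]
        _ = pr p (fun ω => X ω = x) *
            pr p (fun ω => Ev Y y (m + 1) ω ∧ Ev X x (m + 1) ω) *
            (pr p (fun ω => Ev Y y m ω ∧ Ev X x (m + 1) ω) * pr p (Ev X x m)) := by ring


/-- if for each `i = 0, …, n-1` the Markov chain
`Y_i ↔ (X^i, Y^{i-1}) ↔ (X_{i+1}, …, X_n)` holds, then for each `i = 0, …, n-1`
the Markov chain `Y^i ↔ X^i ↔ X_{i+1}` holds. -/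
theorem markov_stepwise_implies_markov_past
    {Ω 𝒳 𝒴 : Type} [Fintype Ω] [Fintype 𝒳] [Fintype 𝒴] {n : ℕ}
    (p : Ω → ℝ) (hpos : ∀ ω, 0 < p ω) (hsum : ∑ ω, p ω = 1)
    (X : Ω → Fin (n + 1) → 𝒳) (Y : Ω → Fin (n + 1) → 𝒴)
    (hmc : ∀ i : Fin n,
      CondIndep p (fun ω => Y ω i.castSucc)
        (fun ω => fun j : {k : Fin (n + 1) // i.castSucc < k} => X ω j.1)
        (fun ω => (pref X i.castSucc ω, spref Y i.castSucc ω))) :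
    ∀ i : Fin n,
      CondIndep p (pref Y i.castSucc) (fun ω => X ω i.succ) (pref X i.castSucc) := by
  intro i a b c
  have hic1 : ((Fin.castSucc i : Fin (n + 1)) : ℕ) = i.1 := rfl
  have hi1 : (Fin.castSucc i : Fin (n + 1)).1 + 1 ≤ n := by have := i.2; omega
  -- assembled full vectors
  set y : Fin (n + 1) → 𝒴 :=
    fun k => if h : (k : ℕ) < (Fin.castSucc i : Fin (n + 1)).1 + 1 then a ⟨k.1, h⟩
      else a ⟨0, Nat.succ_pos _⟩ with hy
  set x : Fin (n + 1) → 𝒳 :=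
    fun k => if h : (k : ℕ) < (Fin.castSucc i : Fin (n + 1)).1 + 1 then c ⟨k.1, h⟩
      else b with hx
  -- prefix-event equivalences
  have hE : ∀ {α : Type} (Z : Ω → Fin (n + 1) → α)
      (w : Fin ((Fin.castSucc i : Fin (n + 1)).1 + 1) → α) (z : Fin (n + 1) → α)
      (hz : ∀ (k : Fin (n + 1)) (hk : (k : ℕ) < (Fin.castSucc i : Fin (n + 1)).1 + 1),
        z k = w ⟨k.1, hk⟩) (ω : Ω),
      (pref Z (Fin.castSucc i) ω = w) ↔ Ev Z z ((Fin.castSucc i : Fin (n + 1)).1 + 1) ω := by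
    intro α Z w z hz ω
    rw [funext_iff]
    constructor
    · intro h k hk
      rw [hz k hk]
      exact h ⟨k.1, hk⟩
    · intro h j
      have hj : ((Fin.castLE (Fin.castSucc i).isLt j : Fin (n + 1)) : ℕ) <
          (Fin.castSucc i : Fin (n + 1)).1 + 1 := by
        have h1 : (Fin.castLE (Fin.castSucc i).isLt j : Fin (n + 1)).1 = (j : ℕ) := rfl
        have h2 := j.isLt; omega
      have h3 := h (Fin.castLE (Fin.castSucc i).isLt j) hj
      show Z ω (Fin.castLE (Fin.castSucc i).isLt j) = w j
      rw [h3, hz _ hj]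
      exact congrArg w (Fin.ext rfl)
  have hEa : ∀ ω, pref Y (Fin.castSucc i) ω = a ↔
      Ev Y y ((Fin.castSucc i : Fin (n + 1)).1 + 1) ω :=
    hE Y a y (fun k hk => by rw [hy]; exact dif_pos hk)
  have hEc : ∀ ω, pref X (Fin.castSucc i) ω = c ↔
      Ev X x ((Fin.castSucc i : Fin (n + 1)).1 + 1) ω :=
    hE X c x (fun k hk => by rw [hx]; exact dif_pos hk)
  -- marginalisation over the tail coordinates
  have hPP : pr p (fun ω => Ev Y y ((Fin.castSucc i : Fin (n + 1)).1 + 1) ω ∧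
        (Ev X x ((Fin.castSucc i : Fin (n + 1)).1 + 1) ω ∧ X ω i.succ = b)) =
      ∑ x' ∈ Finset.univ.filter
        (fun x' : Fin (n + 1) → 𝒳 =>
          (∀ k : Fin (n + 1), (k : ℕ) < (Fin.castSucc i : Fin (n + 1)).1 + 1 → x' k = x k) ∧
            x' i.succ = b),
        pr p (fun ω => Ev Y y ((Fin.castSucc i : Fin (n + 1)).1 + 1) ω ∧ X ω = x') := by
    refine Eq.trans (Eq.trans ?_
      (pr_marg p (Ev Y y ((Fin.castSucc i : Fin (n + 1)).1 + 1)) (fun ω => X ω)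
      (fun x' => (∀ k : Fin (n + 1),
          (k : ℕ) < (Fin.castSucc i : Fin (n + 1)).1 + 1 → x' k = x k) ∧
        x' i.succ = b))) ?_
    · exact pr_congr p fun ω => Iff.rfl
    · exact Finset.sum_congr (Finset.filter_congr_decidable _ _ _) fun _ _ => rfl
  have hBB : pr p (fun ω => Ev X x ((Fin.castSucc i : Fin (n + 1)).1 + 1) ω ∧
        X ω i.succ = b) =
      ∑ x' ∈ Finset.univ.filter
        (fun x' : Fin (n + 1) → 𝒳 =>
          (∀ k : Fin (n + 1), (k : ℕ) < (Fin.castSucc i : Fin (n + 1)).1 + 1 → x' k = x k) ∧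
            x' i.succ = b),
        pr p (fun ω => X ω = x') := by
    refine Eq.trans (Eq.trans ?_ (pr_marg' p (fun ω => X ω)
      (fun x' => (∀ k : Fin (n + 1),
          (k : ℕ) < (Fin.castSucc i : Fin (n + 1)).1 + 1 → x' k = x k) ∧
        x' i.succ = b))) ?_
    · exact pr_congr p fun ω => Iff.rfl
    · exact Finset.sum_congr (Finset.filter_congr_decidable _ _ _) fun _ _ => rfl
  have main : pr p (fun ω => Ev Y y ((Fin.castSucc i : Fin (n + 1)).1 + 1) ω ∧
        (Ev X x ((Fin.castSucc i : Fin (n + 1)).1 + 1) ω ∧ X ω i.succ = b)) *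
        pr p (Ev X x ((Fin.castSucc i : Fin (n + 1)).1 + 1)) =
      pr p (fun ω => Ev X x ((Fin.castSucc i : Fin (n + 1)).1 + 1) ω ∧ X ω i.succ = b) *
        pr p (fun ω => Ev Y y ((Fin.castSucc i : Fin (n + 1)).1 + 1) ω ∧
          Ev X x ((Fin.castSucc i : Fin (n + 1)).1 + 1) ω) := by
    rw [hPP, hBB, Finset.sum_mul, Finset.sum_mul]
    refine Finset.sum_congr rfl fun x' hx' => ?_
    have hx'' := ((Finset.mem_filter.mp hx').2).1
    have eG : pr p (Ev X x ((Fin.castSucc i : Fin (n + 1)).1 + 1)) =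
        pr p (Ev X x' ((Fin.castSucc i : Fin (n + 1)).1 + 1)) :=
      pr_congr p fun ω => forall_congr' fun k => imp_congr_right fun hk => by
        rw [hx'' k hk]
    have eR : pr p (fun ω => Ev Y y ((Fin.castSucc i : Fin (n + 1)).1 + 1) ω ∧
          Ev X x' ((Fin.castSucc i : Fin (n + 1)).1 + 1) ω) =
        pr p (fun ω => Ev Y y ((Fin.castSucc i : Fin (n + 1)).1 + 1) ω ∧
          Ev X x ((Fin.castSucc i : Fin (n + 1)).1 + 1) ω) :=
      pr_congr p fun ω => and_congr_right fun _ =>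
        forall_congr' fun k => imp_congr_right fun hk => by rw [hx'' k hk]
    rw [eG, key p hpos X Y hmc ((Fin.castSucc i : Fin (n + 1)).1 + 1) hi1 x' y, eR]
  -- convert the goal to the canonical form
  have g1 : pr p (fun ω => pref Y (Fin.castSucc i) ω = a ∧ X ω i.succ = b ∧
        pref X (Fin.castSucc i) ω = c) =
      pr p (fun ω => Ev Y y ((Fin.castSucc i : Fin (n + 1)).1 + 1) ω ∧
        (Ev X x ((Fin.castSucc i : Fin (n + 1)).1 + 1) ω ∧ X ω i.succ = b)) :=
    pr_congr p fun ω => by have h1 := hEa ω; have h2 := hEc ω; tauto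
  have g2 : pr p (fun ω => pref X (Fin.castSucc i) ω = c) =
      pr p (Ev X x ((Fin.castSucc i : Fin (n + 1)).1 + 1)) :=
    pr_congr p fun ω => hEc ω
  have g3 : pr p (fun ω => pref Y (Fin.castSucc i) ω = a ∧ pref X (Fin.castSucc i) ω = c) =
      pr p (fun ω => Ev Y y ((Fin.castSucc i : Fin (n + 1)).1 + 1) ω ∧
        Ev X x ((Fin.castSucc i : Fin (n + 1)).1 + 1) ω) :=
    pr_congr p fun ω => by have h1 := hEa ω; have h2 := hEc ω; tauto
  have g4 : pr p (fun ω => X ω i.succ = b ∧ pref X (Fin.castSucc i) ω = c) =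
      pr p (fun ω => Ev X x ((Fin.castSucc i : Fin (n + 1)).1 + 1) ω ∧ X ω i.succ = b) :=
    pr_congr p fun ω => by have h2 := hEc ω; tauto
  show pr p (fun ω => pref Y (Fin.castSucc i) ω = a ∧ X ω i.succ = b ∧
        pref X (Fin.castSucc i) ω = c) * pr p (fun ω => pref X (Fin.castSucc i) ω = c) =
      pr p (fun ω => pref Y (Fin.castSucc i) ω = a ∧ pref X (Fin.castSucc i) ω = c) *
        pr p (fun ω => X ω i.succ = b ∧ pref X (Fin.castSucc i) ω = c)
  rw [g1, g2, g3, g4, main]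
  ring
end

section
/- Let X^n, Y^n be finite-alphabet sequences such that P(Y^n = y^n | X^n = x^n) = Π_{i=0}^n q_i(y_i | y^{i-1}, x_i) for kernels depending only on the current source symbol and past outputs, and suppose X_0,...,X_n are mutually independent. Then for each i, Y^i ↔ X^i ↔ X_{i+1} forms a Markov chain, and consequently I(X^n ← Y^n) = 0. -/
open Finset
open scoped Classical

/-!
Summing out the outputs from the last one backwards (each kernel sums to one) shows that for
`l ≤ k` the joint law of `(X^{<k}, Y^{<l})` is `∏_{j<k} μ_j(x_j) ∏_{j<l} q_j(y_j | y^{j-1}, x_j)`: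
the source symbols not yet seen by the channel never enter. In particular
`P(Y^{<i}, X_i, X^{<i}) = P(Y^{<i}, X^{<i}) μ_i(x_i)`, so `X_i` is independent of `Y^{<i}` given
`X^{<i}`. Every term of `I(X^n ← Y^n)` therefore vanishes, and `Y^i ↔ X^i ↔ X_{i+1}` is the same
statement at index `i + 1`.
-/

lemma Fin.take_succ_eq_snoc_iff {α : Type} {m k : ℕ} (h : k < m) (y : Fin m → α)
    (v : Fin k → α) (a : α) :
    Fin.take (k + 1) h y = Fin.snoc v a ↔ Fin.take k h.le y = v ∧ y ⟨k, h⟩ = a := by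
  rw [Fin.take_succ_eq_snoc, Fin.snoc_inj]

section CausalProd

variable {α : Type}

def causalProd {m : ℕ} (r : (j : Fin m) → α → (Fin j → α) → ℝ) (y : Fin m → α) : ℝ :=
  ∏ j, r j (y j) (Fin.take j j.isLt.le y)

lemma causalProd_snoc {m : ℕ} (r : (j : Fin (m + 1)) → α → (Fin j → α) → ℝ) (v : Fin m → α)
    (a : α) :
    causalProd r (Fin.snoc v a) = causalProd (fun j => r j.castSucc) v * r (Fin.last m) a v := by
  simp only [causalProd, Fin.prod_univ_castSucc, Fin.snoc_castSucc, Fin.snoc_last]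
  congr 1
  · refine Finset.prod_congr rfl fun j _ => congrArg _ (funext fun t => ?_)
    exact Fin.snoc_castSucc (α := fun _ => α) (p := v) (x := a) (i := Fin.castLE j.isLt.le t)
  · exact congrArg _ (Fin.init_snoc (α := fun _ => α) (p := v) (x := a))

lemma sum_take_eq_eq_sum_snoc [Fintype α] {β : Type*} [AddCommMonoid β] {m k : ℕ} (h : k < m)
    (F : (Fin m → α) → β) (v : Fin k → α) :
    ∑ y with Fin.take k h.le y = v, F y =
      ∑ a, ∑ y with Fin.take (k + 1) h y = Fin.snoc v a, F y := by
  rw [← Finset.sum_fiberwise _ (fun y => y ⟨k, h⟩)]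
  refine Finset.sum_congr rfl fun a _ => ?_
  rw [Finset.filter_filter]
  simp only [Fin.take_succ_eq_snoc_iff]

lemma sum_causalProd_of_take_eq [Fintype α] {m : ℕ} (r : (j : Fin m) → α → (Fin j → α) → ℝ)
    (hr : ∀ j past, ∑ a, r j a past = 1) {k : ℕ} (hk : k ≤ m) (v : Fin k → α) :
    ∑ y with Fin.take k hk y = v, causalProd r y = causalProd (fun j => r (Fin.castLE hk j)) v := by
  induction hk using Nat.decreasingInduction with
  | self =>
    simp only [Fin.take_eq_self]
    rw [Finset.filter_eq', if_pos (mem_univ v), sum_singleton]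
    rfl
  | of_succ k h ih =>
    rw [sum_take_eq_eq_sum_snoc h]
    simp only [ih, causalProd_snoc, ← Finset.mul_sum, hr, mul_one]
    rfl

end CausalProd

lemma pr_prod_and {α β : Type} [Fintype α] [Fintype β] (p : α × β → ℝ) (A : α → Prop)
    (B : β → Prop) [DecidablePred A] [DecidablePred B] :
    pr p (fun z => B z.2 ∧ A z.1) = ∑ x with A x, ∑ y with B y, p (x, y) := by
  rw [pr, Fintype.sum_prod_type, Finset.sum_filter]
  refine Finset.sum_congr rfl fun x _ => ?_
  by_cases hA : A x <;> simp [hA, Finset.sum_filter]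

lemma le_pr {Ω : Type} [Fintype Ω] {p : Ω → ℝ} (hp : ∀ ω, 0 ≤ p ω) {E : Ω → Prop} {ω : Ω}
    (hE : E ω) : p ω ≤ pr p E := by
  rw [pr, ← Finset.sum_filter]
  exact Finset.single_le_sum (fun ω _ => hp ω) (Finset.mem_filter.mpr ⟨mem_univ ω, hE⟩)

lemma condMI_eq_zero_of_condIndep {Ω A B C : Type} [Fintype Ω] {p : Ω → ℝ}
    (hp : ∀ ω, 0 ≤ p ω) {f : Ω → A} {g : Ω → B} {h : Ω → C}
    (hfgh : CondIndep p f g h) : condMI p f g h = 0 := by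
  refine Finset.sum_eq_zero fun ω _ => ?_
  rcases (hp ω).eq_or_lt with h0 | h0
  · rw [← h0, zero_mul]
  · have hfh := h0.trans_le (le_pr hp (E := fun ω' => f ω' = f ω ∧ h ω' = h ω) ⟨rfl, rfl⟩)
    have hgh := h0.trans_le (le_pr hp (E := fun ω' => g ω' = g ω ∧ h ω' = h ω) ⟨rfl, rfl⟩)
    rw [hfgh, div_self (mul_pos hfh hgh).ne', Real.log_one, mul_zero]

section CausalChannel

variable {𝒳 𝒴 : Type} [Fintype 𝒳] [Fintype 𝒴] {n : ℕ} {μ : Fin (n + 1) → 𝒳 → ℝ}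
  {q : (i : Fin (n + 1)) → 𝒴 → (Fin i.1 → 𝒴) → 𝒳 → ℝ}
  {p : (Fin (n + 1) → 𝒳) × (Fin (n + 1) → 𝒴) → ℝ}

lemma pr_take_eq_and_take_eq (hμ : ∀ i, ∑ x, μ i x = 1)
    (hq : ∀ i ypast x, ∑ y, q i y ypast x = 1)
    (hp : ∀ z, p z = (∏ i, μ i (z.1 i)) * causalProd (fun i y ypast => q i y ypast (z.1 i)) z.2)
    {kx ky : ℕ} (hyx : ky ≤ kx) (hx : kx ≤ n + 1) (u : Fin kx → 𝒳) (v : Fin ky → 𝒴) :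
    pr p (fun z => Fin.take ky (hyx.trans hx) z.2 = v ∧ Fin.take kx hx z.1 = u) =
      (∏ j, μ (Fin.castLE hx j) (u j)) *
        causalProd (fun j y ypast =>
          q (Fin.castLE (hyx.trans hx) j) y ypast (u (Fin.castLE hyx j))) v := by
  have hμu : ∑ x with Fin.take kx hx x = u, ∏ i, μ i (x i) = ∏ j, μ (Fin.castLE hx j) (u j) :=
    sum_causalProd_of_take_eq (fun i x _ => μ i x) (fun i _ => hμ i) hx u
  rw [pr_prod_and p (Fin.take kx hx · = u) (Fin.take ky _ · = v), ← hμu, Finset.sum_mul]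
  refine Finset.sum_congr rfl fun x hxu => ?_
  rw [(Finset.mem_filter.mp hxu).2.symm]
  simp only [hp, ← Finset.mul_sum]
  rw [sum_causalProd_of_take_eq _ (fun i ypast => hq i ypast _)]
  rfl

lemma pr_take_eq (hμ : ∀ i, ∑ x, μ i x = 1) (hq : ∀ i ypast x, ∑ y, q i y ypast x = 1)
    (hp : ∀ z, p z = (∏ i, μ i (z.1 i)) * causalProd (fun i y ypast => q i y ypast (z.1 i)) z.2)
    {k : ℕ} (hk : k ≤ n + 1) (u : Fin k → 𝒳) :
    pr p (fun z => Fin.take k hk z.1 = u) = ∏ j, μ (Fin.castLE hk j) (u j) := by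
  have h := pr_take_eq_and_take_eq hμ hq hp (Nat.zero_le k) hk u Fin.elim0
  simpa [causalProd] using h

lemma condIndep_spref_source (hμ : ∀ i, ∑ x, μ i x = 1)
    (hq : ∀ i ypast x, ∑ y, q i y ypast x = 1)
    (hp : ∀ z, p z = (∏ i, μ i (z.1 i)) * causalProd (fun i y ypast => q i y ypast (z.1 i)) z.2)
    (i : Fin (n + 1)) : CondIndep p (spref Prod.snd i) (fun z => z.1 i) (spref Prod.fst i) := by
  intro yp a xp
  have hsnoc : ∀ x : Fin (n + 1) → 𝒳,
      (x i = a ∧ Fin.take i i.isLt.le x = xp) ↔ Fin.take (i + 1) i.isLt x = Fin.snoc xp a := by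
    intro x
    rw [Fin.take_succ_eq_snoc_iff, and_comm]
  have hμ_snoc :
      ∏ j : Fin (i + 1), μ (Fin.castLE i.isLt j) (Fin.snoc (α := fun _ => 𝒳) xp a j) =
      (∏ j : Fin i, μ (Fin.castLE i.isLt.le j) (xp j)) * μ i a := by
    rw [Fin.prod_univ_castSucc]
    simp only [Fin.snoc_castSucc, Fin.snoc_last]
    rfl
  have hq_snoc : causalProd (fun j y ypast => q (Fin.castLE i.isLt.le j) y ypast
        (Fin.snoc (α := fun _ => 𝒳) xp a (Fin.castLE (Nat.le_succ i) j))) yp =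
      causalProd (fun j y ypast =>
        q (Fin.castLE i.isLt.le j) y ypast (xp (Fin.castLE le_rfl j))) yp := by
    congr! 4 with j
    exact congrArg _ (Fin.snoc_castSucc (α := fun _ => 𝒳) (p := xp) (x := a) (i := j))
  change
    pr p (fun z => Fin.take i i.isLt.le z.2 = yp ∧ z.1 i = a ∧ Fin.take i i.isLt.le z.1 = xp) *
      pr p (fun z => Fin.take i i.isLt.le z.1 = xp) =
    pr p (fun z => Fin.take i i.isLt.le z.2 = yp ∧ Fin.take i i.isLt.le z.1 = xp) *
      pr p (fun z => z.1 i = a ∧ Fin.take i i.isLt.le z.1 = xp)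
  simp only [hsnoc]
  rw [pr_take_eq_and_take_eq hμ hq hp (kx := i + 1) (Nat.le_succ i) i.isLt, pr_take_eq hμ hq hp,
    pr_take_eq_and_take_eq hμ hq hp le_rfl, pr_take_eq hμ hq hp, hμ_snoc, hq_snoc]
  ring

end CausalChannel

/-- if the joint law is `μ(x^n) ∏_i q_i(y_i | y^{i-1}, x_i)` with
`μ` a product measure (i.e. `X_0, …, X_n` mutually independent) and kernels
depending only on the current source symbol and past outputs, then each Markov
chain `Y^i ↔ X^i ↔ X_{i+1}` holds and `I(X^n ← Y^n) = 0`. -/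
theorem markov_and_revDirInfo_zero_of_causal_kernels_indep_source
    {𝒳 𝒴 : Type} [Fintype 𝒳] [Fintype 𝒴] {n : ℕ}
    (μ : Fin (n + 1) → 𝒳 → ℝ)
    (hμ : ∀ i, (∀ x, 0 ≤ μ i x) ∧ ∑ x, μ i x = 1)
    (q : (i : Fin (n + 1)) → 𝒴 → (Fin i.1 → 𝒴) → 𝒳 → ℝ)
    (hq : ∀ i ypast x, (∀ y, 0 ≤ q i y ypast x) ∧ ∑ y, q i y ypast x = 1)
    (p : (Fin (n + 1) → 𝒳) × (Fin (n + 1) → 𝒴) → ℝ)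
    (hp : ∀ z, p z =
      (∏ i, μ i (z.1 i)) *
      ∏ i, q i (z.2 i) (fun j : Fin i.1 => z.2 (Fin.castLE i.isLt.le j)) (z.1 i)) :
    (∀ i : Fin n,
      CondIndep p (pref (fun z : (Fin (n + 1) → 𝒳) × (Fin (n + 1) → 𝒴) => z.2) i.castSucc)
        (fun z => z.1 i.succ)
        (pref (fun z : (Fin (n + 1) → 𝒳) × (Fin (n + 1) → 𝒴) => z.1) i.castSucc)) ∧
    revDirInfo p (fun z => z.1) (fun z => z.2) = 0 := by
  have hp_nonneg : ∀ z, 0 ≤ p z := fun z => (hp z).symm ▸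
    mul_nonneg (prod_nonneg fun i _ => (hμ i).1 _) (prod_nonneg fun i _ => (hq i _ _).1 _)
  have hmarkov := condIndep_spref_source (fun i => (hμ i).2) (fun i ypast x => (hq i ypast x).2) hp
  -- `pref Z i` and `spref Z (i + 1)` are the same prefix `Z^i`.
  exact ⟨fun i => hmarkov i.succ,
    Finset.sum_eq_zero fun i _ => condMI_eq_zero_of_condIndep hp_nonneg (hmarkov i)⟩
end
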